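/- arXiv:1405.6548 — 2 statements merged into one kernel-verified Lean document; each statement's English description precedes it below -/
import Mathlib

section
/- Let b₀, b₁ be functions on B₁ ⊂ ℝ^n with b_i(x₀) known values and C^{1,1} bounds M := ‖b₀‖_{C²} + ‖b₁‖_{C²}. Fix x₀ with b₀(x₀) = b₁(x₀). Then for r ≤ 1/(1+M) times |∇(b₁−b₀)(x₀)| and all x in the ball B_r(x₀): min{b₀,b₁}(x) > b₀(x₀) − 2r'|∇(b₁−b₀)(x₀)|² + ⟨∇b₀(x₀), x−x₀⟩, where r' = r/|∇(b₁−b₀)(x₀)| (assuming the gradient is nonzero). -/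
open MeasureTheory Metric

/-- Sub-mean-value definition of subharmonicity. -/
def SubharmonicOn {E : Type*} [NormedAddCommGroup E] [NormedSpace ℝ E] [MeasureSpace E]
    (u : E → ℝ) (s : Set E) : Prop :=
  UpperSemicontinuousOn u s ∧
    ∀ x ∈ s, ∀ r > (0 : ℝ), Metric.closedBall x r ⊆ s →
      u x ≤ ⨍ y in Metric.ball x r, u y

/-- The subharmonic envelope of an obstacle `b` on the unit ball. -/
noncomputable def subhEnv {n : ℕ} (b : EuclideanSpace ℝ (Fin n) → ℝ) :
    EuclideanSpace ℝ (Fin n) → ℝ :=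
  fun x => sSup {y : ℝ | ∃ f : EuclideanSpace ℝ (Fin n) → ℝ,
    SubharmonicOn f (ball (0 : EuclideanSpace ℝ (Fin n)) 1) ∧
    (∀ z ∈ ball (0 : EuclideanSpace ℝ (Fin n)) 1, f z ≤ b z) ∧ y = f x}

/-- `b` is `C^{1,1}` on the unit ball with norm bound `M`: bounds on the function,
its gradient, and a Lipschitz bound on the gradient (i.e. essential second derivative bound). -/
def C11On {n : ℕ} (b : EuclideanSpace ℝ (Fin n) → ℝ) (M : NNReal) : Prop :=
  (∀ x ∈ ball (0 : EuclideanSpace ℝ (Fin n)) 1,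
    DifferentiableAt ℝ b x ∧ |b x| ≤ M ∧ ‖fderiv ℝ b x‖ ≤ M) ∧
  LipschitzOnWith M (fderiv ℝ b) (ball (0 : EuclideanSpace ℝ (Fin n)) 1)

/-! Write `L = |∇(b₁ - b₀)(x₀)|`, so `r = r' L`. By the mean value theorem applied to the
Lipschitz gradient, each obstacle lies within `M |x - x₀|² ≤ M r'² L² ≤ r' L²` of its tangent plane
at `x₀` (this is where `r' ≤ 1/(1+M)` enters). The two tangent planes agree at the crossing point
`x₀` and differ by `∇(b₁ - b₀)(x₀)·(x - x₀) > -L r = -r' L²` on the ball, so both obstacles exceed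
`b₀(x₀) + ∇b₀(x₀)·(x - x₀) - 2 r' L²`. -/

theorem Convex.norm_sub_sub_fderiv_le_of_lipschitzOnWith {E G : Type*} [NormedAddCommGroup E]
    [NormedSpace ℝ E] [NormedAddCommGroup G] [NormedSpace ℝ G] {f : E → G} {s : Set E}
    {K : NNReal} (hs : Convex ℝ s) (hf : ∀ y ∈ s, DifferentiableAt ℝ f y)
    (hf' : LipschitzOnWith K (fderiv ℝ f) s) {x₀ x : E} (hx₀ : x₀ ∈ s) (hx : x ∈ s) :
    ‖f x - f x₀ - fderiv ℝ f x₀ (x - x₀)‖ ≤ K * ‖x - x₀‖ ^ 2 := by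
  have hseg : segment ℝ x₀ x ⊆ s := hs.segment_subset hx₀ hx
  have hderiv : ∀ y ∈ segment ℝ x₀ x, HasFDerivWithinAt (fun y => f y - fderiv ℝ f x₀ y)
      (fderiv ℝ f y - fderiv ℝ f x₀) (segment ℝ x₀ x) y := fun y hy =>
    ((hf y (hseg hy)).hasFDerivAt.sub (fderiv ℝ f x₀).hasFDerivAt).hasFDerivWithinAt
  have hbound : ∀ y ∈ segment ℝ x₀ x, ‖fderiv ℝ f y - fderiv ℝ f x₀‖ ≤ K * ‖x - x₀‖ :=
    fun y hy => calc
      ‖fderiv ℝ f y - fderiv ℝ f x₀‖ ≤ K * ‖y - x₀‖ := hf'.norm_sub_le (hseg hy) hx₀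
      _ ≤ K * ‖x - x₀‖ := by gcongr; exact norm_sub_le_of_mem_segment hy
  calc ‖f x - f x₀ - fderiv ℝ f x₀ (x - x₀)‖
      = ‖(f x - fderiv ℝ f x₀ x) - (f x₀ - fderiv ℝ f x₀ x₀)‖ := by
        rw [map_sub]; congr 1; abel
    _ ≤ K * ‖x - x₀‖ * ‖x - x₀‖ :=
        (convex_segment x₀ x).norm_image_sub_le_of_norm_hasFDerivWithin_le hderiv hbound
          (left_mem_segment ℝ x₀ x) (right_mem_segment ℝ x₀ x)
    _ = K * ‖x - x₀‖ ^ 2 := by ring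

theorem C11On.abs_sub_sub_fderiv_le {n : ℕ} {b : EuclideanSpace ℝ (Fin n) → ℝ} {M : NNReal}
    (hb : C11On b M) {x₀ x : EuclideanSpace ℝ (Fin n)} (hx₀ : x₀ ∈ ball 0 1)
    (hx : x ∈ ball 0 1) :
    |b x - b x₀ - fderiv ℝ b x₀ (x - x₀)| ≤ M * ‖x - x₀‖ ^ 2 :=
  (convex_ball 0 1).norm_sub_sub_fderiv_le_of_lipschitzOnWith (fun y hy => (hb.1 y hy).1) hb.2
    hx₀ hx

theorem rooftop_above_affine_general (n : ℕ) (M : NNReal)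
    (b₀ b₁ : EuclideanSpace ℝ (Fin n) → ℝ)
    (hb₀ : C11On b₀ M) (hb₁ : C11On b₁ M)
    (x₀ : EuclideanSpace ℝ (Fin n)) (hx₀ : x₀ ∈ ball (0 : EuclideanSpace ℝ (Fin n)) (1/2))
    (hcross : b₀ x₀ = b₁ x₀)
    (r' r : ℝ) (hr' : r' ≤ 1 / (1 + (M : ℝ)))
    (hr : r = r' * ‖fderiv ℝ (fun y => b₁ y - b₀ y) x₀‖) (hr2 : r ≤ 1/2) :
    ∀ x ∈ ball x₀ r,
      min (b₀ x) (b₁ x) >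
        b₀ x₀ - 2 * r' * ‖fderiv ℝ (fun y => b₁ y - b₀ y) x₀‖ ^ 2
          + fderiv ℝ b₀ x₀ (x - x₀) := by
  intro x hx
  set D := fderiv ℝ (fun y => b₁ y - b₀ y) x₀ with hD
  have hdist : ‖x - x₀‖ < r := mem_ball_iff_norm.mp hx
  have hrpos : 0 < r' * ‖D‖ := hr ▸ (norm_nonneg _).trans_lt hdist
  have hr'pos : 0 < r' := pos_of_mul_pos_left hrpos (norm_nonneg D)
  have hDpos : 0 < ‖D‖ := pos_of_mul_pos_right hrpos hr'pos.le
  have hx₀₁ : x₀ ∈ ball 0 1 := ball_subset_ball (by norm_num) hx₀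
  have hx₁ : x ∈ ball 0 1 := by
    rw [mem_ball_zero_iff] at hx₀ ⊢
    linarith [norm_le_insert' x x₀]
  have hMr' : (M : ℝ) * r' ≤ 1 := by
    rw [le_div_iff₀ (by positivity)] at hr'
    nlinarith
  have hquadratic : (M : ℝ) * ‖x - x₀‖ ^ 2 ≤ r' * ‖D‖ ^ 2 := calc
    (M : ℝ) * ‖x - x₀‖ ^ 2 ≤ M * r ^ 2 := by gcongr
    _ = (M * r') * (r' * ‖D‖ ^ 2) := by rw [hr]; ring
    _ ≤ r' * ‖D‖ ^ 2 := mul_le_of_le_one_left (by positivity) hMr'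
  have hlinear : -(r' * ‖D‖ ^ 2) < D (x - x₀) := calc
    -(r' * ‖D‖ ^ 2) = -(‖D‖ * r) := by rw [hr]; ring
    _ < -(‖D‖ * ‖x - x₀‖) := by gcongr
    _ ≤ D (x - x₀) := neg_le_of_abs_le (D.le_opNorm (x - x₀))
  have hsplit : fderiv ℝ b₁ x₀ = fderiv ℝ b₀ x₀ + D := by
    rw [hD, fderiv_fun_sub (hb₁.1 x₀ hx₀₁).1 (hb₀.1 x₀ hx₀₁).1]
    abel
  have h₀ := abs_le.mp (hb₀.abs_sub_sub_fderiv_le hx₀₁ hx₁)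
  have h₁ := abs_le.mp (hb₁.abs_sub_sub_fderiv_le hx₀₁ hx₁)
  rw [hsplit, add_apply, ← hcross] at h₁
  have : 0 < r' * ‖D‖ ^ 2 := by positivity
  exact lt_min (by linarith) (by linarith)

/-- The lower-bound half of the sandwich estimate in Proposition 5.1: near a crossing point
the rooftop `min {b₀, b₁}` stays strictly above an explicit affine function. -/
theorem rooftop_above_affine (n : ℕ) (M : NNReal)
    (b₀ b₁ : EuclideanSpace ℝ (Fin n) → ℝ)
    (hb₀ : C11On b₀ M) (hb₁ : C11On b₁ M)
    (x₀ : EuclideanSpace ℝ (Fin n)) (hx₀ : x₀ ∈ ball (0 : EuclideanSpace ℝ (Fin n)) (1/2))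
    (hcross : b₀ x₀ = b₁ x₀)
    (hgrad : fderiv ℝ (fun y => b₁ y - b₀ y) x₀ ≠ 0)
    (r' r : ℝ) (hr'pos : 0 < r') (hr' : r' ≤ 1 / (1 + (M : ℝ)))
    (hr : r = r' * ‖fderiv ℝ (fun y => b₁ y - b₀ y) x₀‖) (hr2 : r ≤ 1/2) :
    ∀ x ∈ ball x₀ r,
      min (b₀ x) (b₁ x) >
        b₀ x₀ - 2 * r' * ‖fderiv ℝ (fun y => b₁ y - b₀ y) x₀‖ ^ 2
          + fderiv ℝ b₀ x₀ (x - x₀) :=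
  rooftop_above_affine_general n M b₀ b₁ hb₀ hb₁ x₀ hx₀ hcross r' r hr' hr hr2
end

section
/- Let B₁ ⊂ ℝ^n and let b : B₁ → ℝ be Lipschitz with constant L. Then the subharmonic envelope b_env := sup{f subharmonic on B₁ : f ≤ b} satisfies: b_env is Lipschitz on B_{1/2} with Lipschitz constant bounded by C(n, L, ‖b‖_∞). -/
open MeasureTheory Metric

/-!
Let `x, y` lie in the closed ball of radius `ρ < 1`, at distance `d`, and put `t = d / (1 - ρ)`.
If `t < 1`, the contraction `z ↦ (1 - t) • z + (y - (1 - t) • x)` maps the unit ball into itself,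
sends `x` to `y` and moves points by at most `2 t`. Precomposing a competitor for the envelope
with it and subtracting `2 L t` keeps it subharmonic and below the `L`-Lipschitz obstacle, which
gives `subhEnv b y ≤ subhEnv b x + 2 L t`. If `t ≥ 1`, the bound `|subhEnv b| ≤ B` suffices.
-/

open Set Module Measure
open scoped NNReal

section Contraction

variable {E : Type*} [NormedAddCommGroup E] [NormedSpace ℝ E]

theorem image_smul_add_closedBall {l : ℝ} (hl : 0 < l) (a x : E) {r : ℝ} (hr : 0 ≤ r) :
    (fun z => l • z + a) '' closedBall x r = closedBall (l • x + a) (l * r) := by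
  rw [← image_image (· + a) (l • ·), image_smul, _root_.smul_closedBall l x hr,
    image_add_right, preimage_add_right_closedBall, sub_neg_eq_add, Real.norm_of_nonneg hl.le]

variable {x y z : E} {ρ t : ℝ}

theorem norm_contraction_lt_one (hx : ‖x‖ ≤ ρ) (hyx : ‖y - x‖ ≤ t * (1 - ρ)) (ht₀ : 0 ≤ t)
    (ht₁ : t < 1) (hz : ‖z‖ < 1) : ‖(1 - t) • z + (y - (1 - t) • x)‖ < 1 :=
  calc ‖(1 - t) • z + (y - (1 - t) • x)‖ = ‖(1 - t) • z + ((y - x) + t • x)‖ := by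
        congr 2; module
    _ ≤ (1 - t) * ‖z‖ + (‖y - x‖ + t * ‖x‖) := by
        grw [norm_add_le, norm_add_le, norm_smul, norm_smul, Real.norm_of_nonneg (by linarith),
          Real.norm_of_nonneg ht₀]
    _ < 1 := by nlinarith

theorem norm_contraction_sub_le (hx : ‖x‖ ≤ ρ) (hyx : ‖y - x‖ ≤ t * (1 - ρ)) (ht₀ : 0 ≤ t)
    (hz : ‖z‖ ≤ 1) : ‖(1 - t) • z + (y - (1 - t) • x) - z‖ ≤ 2 * t :=
  calc ‖(1 - t) • z + (y - (1 - t) • x) - z‖ = ‖(y - x) + t • (x - z)‖ := by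
        congr 1; module
    _ ≤ ‖y - x‖ + t * (‖x‖ + ‖z‖) := by
        grw [norm_add_le, norm_smul, Real.norm_of_nonneg ht₀, norm_sub_le x z]
    _ ≤ 2 * t := by nlinarith

end Contraction

section MeanValue

theorem setIntegral_ball_comp_add_right {E : Type*} [NormedAddCommGroup E] [MeasurableSpace E]
    [BorelSpace E] (μ : Measure E) [μ.IsAddRightInvariant] (f : E → ℝ) (a x : E) (r : ℝ) :
    ∫ y in ball x r, f (y + a) ∂μ = ∫ y in ball (x + a) r, f y ∂μ := by
  have h := (measurePreserving_add_right μ a).setIntegral_preimage_emb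
    (Homeomorph.addRight a).measurableEmbedding f (ball (x + a) r)
  rwa [preimage_add_right_ball, add_sub_cancel_right] at h

variable {E : Type*} [NormedAddCommGroup E] [NormedSpace ℝ E] [FiniteDimensional ℝ E]
  [MeasureSpace E] [(volume : Measure E).IsAddHaarMeasure]

theorem subharmonicOn_const (c : ℝ) (s : Set E) : SubharmonicOn (fun _ => c) s :=
  ⟨fun _ _ => upperSemicontinuousWithinAt_const, fun x _ _ hr _ =>
    (setAverage_const (measure_ball_pos volume x hr).ne' measure_ball_lt_top.ne c).ge⟩

variable [BorelSpace E]

theorem setAverage_ball_comp_smul_add (f : E → ℝ) {l : ℝ} (hl : 0 < l) (a x : E) (r : ℝ) :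
    ⨍ y in ball x r, f (l • y + a) = ⨍ y in ball (l • x + a) (l * r), f y := by
  have hint : ∫ y in ball x r, f (l • y + a) =
      (l ^ finrank ℝ E)⁻¹ • ∫ y in ball (l • x + a) (l * r), f y := by
    rw [setIntegral_comp_smul_of_pos volume (fun y => f (y + a)) _ hl, _root_.smul_ball hl.ne',
      Real.norm_of_nonneg hl.le, setIntegral_ball_comp_add_right]
  have hvol : volume.real (ball (l • x + a) (l * r)) =
      l ^ finrank ℝ E * volume.real (ball x r) := by
    rw [measureReal_def, measureReal_def, addHaar_ball_mul_of_pos volume _ hl,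
      addHaar_ball_center volume x, ENNReal.toReal_mul, ENNReal.toReal_ofReal (by positivity)]
  rw [setAverage_eq, setAverage_eq, hint, hvol, smul_smul, mul_inv, mul_comm]

/-- If `u` is not integrable on the ball, both averages are junk zeros: hence `0 ≤ c`. -/
theorem sub_le_setAverage_ball_sub {u : E → ℝ} {x : E} {r : ℝ} (hr : 0 < r)
    (hu : u x ≤ ⨍ y in ball x r, u y) {c : ℝ} (hc : 0 ≤ c) :
    u x - c ≤ ⨍ y in ball x r, (u y - c) := by
  by_cases hi : IntegrableOn u (ball x r)
  · have hV : volume.real (ball x r) ≠ 0 :=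
      (ENNReal.toReal_pos (measure_ball_pos volume x hr).ne' measure_ball_lt_top.ne).ne'
    rwa [setAverage_eq, integral_sub hi (integrableOn_const measure_ball_lt_top.ne),
      setIntegral_const, smul_sub, smul_smul, inv_mul_cancel₀ hV, one_smul, ← setAverage_eq,
      sub_le_sub_iff_right]
  · have hi' : ¬IntegrableOn (fun y => u y - c) (ball x r) := fun h =>
      hi ((h.add (integrableOn_const measure_ball_lt_top.ne)).congr_fun
        (fun y _ => sub_add_cancel (u y) c) measurableSet_ball)
    rw [setAverage_eq, integral_undef hi, smul_zero] at hu
    rw [setAverage_eq, integral_undef hi', smul_zero]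
    linarith

theorem SubharmonicOn.sub_const {u : E → ℝ} {s : Set E} (hu : SubharmonicOn u s) {c : ℝ}
    (hc : 0 ≤ c) : SubharmonicOn (fun z => u z - c) s :=
  ⟨hu.1.add upperSemicontinuousOn_const (γ := ℝ), fun x hx r hr hrs =>
    sub_le_setAverage_ball_sub hr (hu.2 x hx r hr hrs) hc⟩

theorem SubharmonicOn.comp_smul_add {f : E → ℝ} {s t : Set E} (hf : SubharmonicOn f t) {l : ℝ}
    (hl : 0 < l) {a : E} (hst : MapsTo (fun z => l • z + a) s t) :
    SubharmonicOn (fun z => f (l • z + a)) s := by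
  refine ⟨hf.1.comp (by fun_prop) hst, fun x hx r hr hrs => ?_⟩
  have hball : closedBall (l • x + a) (l * r) ⊆ t := by
    rw [← image_smul_add_closedBall hl a x hr.le]
    exact (hst.mono_left hrs).image_subset
  calc f (l • x + a) ≤ ⨍ y in ball (l • x + a) (l * r), f y :=
        hf.2 _ (hst hx) _ (mul_pos hl hr) hball
    _ = ⨍ y in ball x r, f (l • y + a) := (setAverage_ball_comp_smul_add f hl a x r).symm

end MeanValue

section Envelope

variable {n : ℕ} {b : EuclideanSpace ℝ (Fin n) → ℝ} {x y : EuclideanSpace ℝ (Fin n)}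

theorem le_subhEnv {f : EuclideanSpace ℝ (Fin n) → ℝ} (hf : SubharmonicOn f (ball 0 1))
    (hfb : ∀ z ∈ ball 0 1, f z ≤ b z) (hx : x ∈ ball 0 1) : f x ≤ subhEnv b x :=
  le_csSup ⟨b x, by rintro _ ⟨g, -, hgb, rfl⟩; exact hgb x hx⟩ ⟨f, hf, hfb, rfl⟩

theorem subhEnv_le {m c : ℝ} (hm : ∀ z ∈ ball 0 1, m ≤ b z)
    (h : ∀ f, SubharmonicOn f (ball 0 1) → (∀ z ∈ ball 0 1, f z ≤ b z) → f x ≤ c) :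
    subhEnv b x ≤ c :=
  csSup_le ⟨m, fun _ => m, subharmonicOn_const m _, hm, rfl⟩
    (by rintro _ ⟨f, hf, hfb, rfl⟩; exact h f hf hfb)

theorem abs_subhEnv_le {B : ℝ} (hB : ∀ z ∈ ball 0 1, |b z| ≤ B) (hx : x ∈ ball 0 1) :
    |subhEnv b x| ≤ B :=
  abs_le.2 ⟨le_subhEnv (subharmonicOn_const _ _) (fun z hz => (abs_le.1 (hB z hz)).1) hx,
    subhEnv_le (fun z hz => (abs_le.1 (hB z hz)).1)
      fun _ _ hfb => (hfb x hx).trans (abs_le.1 (hB x hx)).2⟩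

theorem subhEnv_le_subhEnv_add {L : ℝ≥0} {m ρ t : ℝ}
    (hb : LipschitzOnWith L b (ball 0 1)) (hm : ∀ z ∈ ball 0 1, m ≤ b z) (hρ : ρ < 1)
    (hx : ‖x‖ ≤ ρ) (hyx : ‖y - x‖ ≤ t * (1 - ρ)) (ht₀ : 0 ≤ t) (ht₁ : t < 1) :
    subhEnv b y ≤ subhEnv b x + 2 * L * t := by
  set T := fun z : EuclideanSpace ℝ (Fin n) => (1 - t) • z + (y - (1 - t) • x)
  have hT : MapsTo T (ball 0 1) (ball 0 1) := fun z hz => by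
    rw [mem_ball_zero_iff] at hz ⊢
    exact norm_contraction_lt_one hx hyx ht₀ ht₁ hz
  have hTx : T x = y := by simp only [T]; abel
  have hx₁ : x ∈ ball 0 1 := mem_ball_zero_iff.2 (hx.trans_lt hρ)
  refine subhEnv_le hm fun f hf hfb => ?_
  have hg : SubharmonicOn (fun z => f (T z) - 2 * L * t) (ball 0 1) :=
    (hf.comp_smul_add (sub_pos.2 ht₁) hT).sub_const (by positivity)
  have hgb : ∀ z ∈ ball 0 1, f (T z) - 2 * L * t ≤ b z := fun z hz => by
    have hshift : dist (T z) z ≤ 2 * t := by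
      rw [dist_eq_norm]
      exact norm_contraction_sub_le hx hyx ht₀ (mem_ball_zero_iff.1 hz).le
    have hLip : b (T z) - b z ≤ L * dist (T z) z :=
      (le_abs_self _).trans (hb.dist_le_mul _ (hT hz) _ hz)
    have hfT : f (T z) ≤ b (T z) := hfb _ (hT hz)
    have := mul_le_mul_of_nonneg_left hshift L.coe_nonneg
    linarith
  have := le_subhEnv hg hgb hx₁
  rw [hTx] at this
  linarith

theorem lipschitzOnWith_subhEnv {L B : ℝ≥0} {ρ : ℝ} (hρ : ρ < 1)
    (hb : LipschitzOnWith L b (ball 0 1)) (hB : ∀ z ∈ ball 0 1, |b z| ≤ B) :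
    LipschitzOnWith (Real.toNNReal (2 * (L + B) / (1 - ρ))) (subhEnv b) (closedBall 0 ρ) := by
  refine LipschitzOnWith.of_le_add_mul' _ fun y hy x hx => ?_
  rw [mem_closedBall_zero_iff] at hx hy
  have hρ' : 0 < 1 - ρ := sub_pos.2 hρ
  set d := dist y x
  set t := d / (1 - ρ)
  have ht₀ : 0 ≤ t := div_nonneg dist_nonneg hρ'.le
  have hK : 2 * L * t + 2 * B * t = 2 * (L + B) / (1 - ρ) * d := by ring
  have hBt : 0 ≤ 2 * B * t := by positivity
  have hLt : 0 ≤ 2 * L * t := by positivity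
  by_cases hnear : t < 1
  · have hyx : ‖y - x‖ ≤ t * (1 - ρ) := by rw [div_mul_cancel₀ _ hρ'.ne', ← dist_eq_norm]
    have := subhEnv_le_subhEnv_add hb (fun z hz => (abs_le.1 (hB z hz)).1) hρ hx hyx ht₀ hnear
    linarith
  · have h2B : 2 * (B : ℝ) ≤ 2 * B * t := le_mul_of_one_le_right (by positivity) (not_lt.1 hnear)
    have hy₁ := abs_le.1 (abs_subhEnv_le hB (mem_ball_zero_iff.2 (hy.trans_lt hρ)))
    have hx₁ := abs_le.1 (abs_subhEnv_le hB (mem_ball_zero_iff.2 (hx.trans_lt hρ)))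
    linarith

end Envelope

/-- Lipschitz regularity of the subharmonic envelope of a Lipschitz obstacle
(cf. Caffarelli, Lemma 3(a)). -/
theorem subh_envelope_lipschitz (n : ℕ) (L : NNReal) (B : ℝ) :
    ∃ C : NNReal, ∀ b : EuclideanSpace ℝ (Fin n) → ℝ,
      LipschitzOnWith L b (ball (0 : EuclideanSpace ℝ (Fin n)) 1) →
      (∀ x ∈ ball (0 : EuclideanSpace ℝ (Fin n)) 1, |b x| ≤ B) →
      LipschitzOnWith C (subhEnv b) (ball (0 : EuclideanSpace ℝ (Fin n)) (1/2)) :=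
  ⟨_, fun _ hb hB => (lipschitzOnWith_subhEnv (B := B.toNNReal) (ρ := 1 / 2) (by norm_num) hb
    fun z hz => (hB z hz).trans (Real.le_coe_toNNReal B)).mono ball_subset_closedBall⟩
end
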